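/- arXiv:1911.03424 — 2 statements merged into one kernel-verified Lean document; each statement's English description precedes it below -/
import Mathlib

section
/- For real numbers δ, δ_N with 0 ≤ δ < 1 and δ_N² ≤ δ⁴/4, the expression 1 − (δ² − δ⁴/2 − 2δ_N²)/√((1 − δ²)((2 − δ²)² − 4δ_N²)) is minimized over δ_N at δ_N = 0, where it equals 1 − δ²/(2√(1 − δ²)). -/
/-- For 0 ≤ δ < 1 and δ_N² ≤ δ⁴/4, the expression
1 − (δ² − δ⁴/2 − 2δ_N²)/√((1 − δ²)((2 − δ²)² − 4δ_N²)) is minimized over δ_N at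
δ_N = 0, where it equals 1 − δ²/(2√(1 − δ²)). -/
theorem stmt6 (δ δN : ℝ) (hδ0 : 0 ≤ δ) (hδ1 : δ < 1) (hδN : δN ^ 2 ≤ δ ^ 4 / 4) :
    1 - δ ^ 2 / (2 * Real.sqrt (1 - δ ^ 2)) ≤
      1 - (δ ^ 2 - δ ^ 4 / 2 - 2 * δN ^ 2) /
        Real.sqrt ((1 - δ ^ 2) * ((2 - δ ^ 2) ^ 2 - 4 * δN ^ 2)) ∧
    1 - (δ ^ 2 - δ ^ 4 / 2 - 2 * (0 : ℝ) ^ 2) /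
        Real.sqrt ((1 - δ ^ 2) * ((2 - δ ^ 2) ^ 2 - 4 * (0 : ℝ) ^ 2)) =
      1 - δ ^ 2 / (2 * Real.sqrt (1 - δ ^ 2)) := by
  have hb : δ ^ 2 < 1 := by nlinarith
  have hb0 : (0:ℝ) < 1 - δ ^ 2 := by linarith
  have hs : 0 < Real.sqrt (1 - δ ^ 2) := Real.sqrt_pos.2 hb0
  have hA : (0:ℝ) < (2 - δ ^ 2) ^ 2 - 4 * δN ^ 2 := by nlinarith [sq_nonneg δ]
  have hsplit : Real.sqrt ((1 - δ ^ 2) * ((2 - δ ^ 2) ^ 2 - 4 * δN ^ 2)) =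
      Real.sqrt (1 - δ ^ 2) * Real.sqrt ((2 - δ ^ 2) ^ 2 - 4 * δN ^ 2) :=
    Real.sqrt_mul hb0.le _
  have hsA : 0 < Real.sqrt ((2 - δ ^ 2) ^ 2 - 4 * δN ^ 2) := Real.sqrt_pos.2 hA
  have hN : 0 ≤ δ ^ 2 * (2 - δ ^ 2) - 4 * δN ^ 2 := by nlinarith [sq_nonneg δ]
  constructor
  · have key : δ ^ 2 * (2 - δ ^ 2) - 4 * δN ^ 2 ≤
        δ ^ 2 * Real.sqrt ((2 - δ ^ 2) ^ 2 - 4 * δN ^ 2) := by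
      have h1 : δ ^ 2 * Real.sqrt ((2 - δ ^ 2) ^ 2 - 4 * δN ^ 2) =
          Real.sqrt (δ ^ 4 * ((2 - δ ^ 2) ^ 2 - 4 * δN ^ 2)) := by
        rw [Real.sqrt_mul (by positivity), show (δ:ℝ) ^ 4 = (δ ^ 2) ^ 2 by ring,
          Real.sqrt_sq (by positivity)]
      rw [h1]
      rw [show δ ^ 2 * (2 - δ ^ 2) - 4 * δN ^ 2 =
          Real.sqrt ((δ ^ 2 * (2 - δ ^ 2) - 4 * δN ^ 2) ^ 2) by
        rw [Real.sqrt_sq hN]]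
      apply Real.sqrt_le_sqrt
      have h2 : (0:ℝ) ≤ 4 * δ ^ 2 - 3 * δ ^ 4 - 4 * δN ^ 2 := by nlinarith [sq_nonneg δ]
      nlinarith [mul_nonneg (sq_nonneg δN) h2]
    have hD : 0 < Real.sqrt ((1 - δ ^ 2) * ((2 - δ ^ 2) ^ 2 - 4 * δN ^ 2)) := by
      rw [hsplit]; positivity
    have h2s : (0:ℝ) < 2 * Real.sqrt (1 - δ ^ 2) := by positivity
    have : (δ ^ 2 - δ ^ 4 / 2 - 2 * δN ^ 2) /
        Real.sqrt ((1 - δ ^ 2) * ((2 - δ ^ 2) ^ 2 - 4 * δN ^ 2)) ≤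
        δ ^ 2 / (2 * Real.sqrt (1 - δ ^ 2)) := by
      rw [div_le_div_iff₀ hD h2s, hsplit]
      nlinarith [mul_le_mul_of_nonneg_right key hs.le, hs.le, hsA.le,
        mul_nonneg hs.le hsA.le]
    linarith
  · have h0 : (2 - δ ^ 2) ^ 2 - 4 * (0:ℝ) ^ 2 = (2 - δ ^ 2) ^ 2 := by ring
    rw [h0, Real.sqrt_mul hb0.le, Real.sqrt_sq (by nlinarith : (0:ℝ) ≤ 2 - δ ^ 2)]
    have h2 : (0:ℝ) < 2 - δ ^ 2 := by nlinarith
    field_simp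
    ring
end

section
/- Let Σ ⊂ ℝ^d be a closed set, u ∈ Σ, τ a simplex, x ∈ τ a point whose nearest point x̃ on Σ is unique, with x̃ ≠ u and |x x̃| < |x u|. Then there exists a vertex v of τ with |v x̃| < |v u|. -/
open RealInnerProductSpace


/-- Σ a closed set, u ∈ Σ, τ a simplex (convex hull of affinely
independent points), x ∈ τ with unique nearest point x̃ on Σ, x̃ ≠ u and
|x x̃| < |x u|.  Then some vertex v of τ satisfies |v x̃| < |v u|. -/
theorem stmt13 (d n : ℕ) (S : Set (EuclideanSpace ℝ (Fin d))) (hS : IsClosed S)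
    (u : EuclideanSpace ℝ (Fin d)) (hu : u ∈ S)
    (v : Fin (n + 1) → EuclideanSpace ℝ (Fin d)) (hindep : AffineIndependent ℝ v)
    (x xt : EuclideanSpace ℝ (Fin d))
    (hx : x ∈ convexHull ℝ (Set.range v))
    (hxt : xt ∈ S)
    (hnear : ∀ y ∈ S, dist x xt ≤ dist x y)
    (huniq : ∀ y ∈ S, dist x y = dist x xt → y = xt)
    (hne : xt ≠ u) (hlt : dist x xt < dist x u) :
    ∃ i, dist (v i) xt < dist (v i) u := by
  by_contra h
  push_neg at h
  set r : ℝ := (‖xt‖ ^ 2 - ‖u‖ ^ 2) / 2 with hr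
  have hlin : IsLinearMap ℝ (fun y : EuclideanSpace ℝ (Fin d) => (inner ℝ y (xt - u) : ℝ)) :=
    ⟨fun a b => inner_add_left a b _, fun c a => real_inner_smul_left a _ c⟩
  have hiff : ∀ y : EuclideanSpace ℝ (Fin d),
      (dist y u ≤ dist y xt ↔ (inner ℝ y (xt - u) : ℝ) ≤ r) := by
    intro y
    have h1 : dist y u ^ 2 = ‖y‖ ^ 2 - 2 * (inner ℝ y (u) : ℝ) + ‖u‖ ^ 2 := by
      rw [dist_eq_norm, ← real_inner_self_eq_norm_sq, ← real_inner_self_eq_norm_sq,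
        ← real_inner_self_eq_norm_sq, inner_sub_sub_self, real_inner_comm u y]
      ring
    have h2 : dist y xt ^ 2 = ‖y‖ ^ 2 - 2 * (inner ℝ y (xt) : ℝ) + ‖xt‖ ^ 2 := by
      rw [dist_eq_norm, ← real_inner_self_eq_norm_sq, ← real_inner_self_eq_norm_sq,
        ← real_inner_self_eq_norm_sq, inner_sub_sub_self, real_inner_comm xt y]
      ring
    have h3 : (inner ℝ y (xt - u) : ℝ) = (inner ℝ y (xt) : ℝ) - (inner ℝ y (u) : ℝ) := inner_sub_right y xt u
    constructor
    · intro hd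
      have : dist y u ^ 2 ≤ dist y xt ^ 2 := by
        have := dist_nonneg (x := y) (y := u)
        nlinarith
      rw [h1, h2] at this
      rw [h3, hr]; linarith
    · intro hd
      rw [h3, hr] at hd
      have hsq : dist y u ^ 2 ≤ dist y xt ^ 2 := by rw [h1, h2]; linarith
      have h0 := dist_nonneg (x := y) (y := xt)
      nlinarith [dist_nonneg (x := y) (y := u)]
  have hconv : Convex ℝ {y : EuclideanSpace ℝ (Fin d) | (inner ℝ y (xt - u) : ℝ) ≤ r} :=
    convex_halfSpace_le hlin r
  have hsub : convexHull ℝ (Set.range v) ⊆ {y | (inner ℝ y (xt - u) : ℝ) ≤ r} := by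
    apply convexHull_min _ hconv
    rintro _ ⟨i, rfl⟩
    exact (hiff (v i)).mp (h i)
  have := (hiff x).mpr (hsub hx)
  linarith
end
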